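/- arXiv:1310.7677 — 2 statements merged into one kernel-verified Lean document; each statement's English description precedes it below -/
import Mathlib

section
/- If the CFL-type condition Δt/h^α ≤ 1/(2 ε C_α (1 + 1/α − ζ(α−1))) holds, then for every integer j with |j| < J (where h = 1/J), the diagonal coefficient of the explicit Euler absorbing scheme is nonnegative: 1 + 2Δt ε C_α ζ(α−1) h^{−α} − (Δt ε C_α/α)[(1+jh)^{−α} + (1−jh)^{−α}] − Δt ε C_α h Σ''_{k=−J−j, k≠0}^{J−j} 1/|kh|^{1+α} ≥ 0. -/
open scoped BigOperators

/-- The constant `C_α = α Γ((1+α)/2) / (2^{1-α} √π Γ(1-α/2))`. -/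
noncomputable def Cconst (α : ℝ) : ℝ :=
  α * Real.Gamma ((1 + α) / 2) /
    ((2 : ℝ) ^ (1 - α) * Real.sqrt Real.pi * Real.Gamma (1 - α / 2))

/-- The real value of the Riemann zeta function at a real argument. -/
noncomputable def zetaR (s : ℝ) : ℝ := (riemannZeta (s : ℂ)).re

/-- The double-primed sum `Σ''_{k=a, k≠0}^{b} g(k)`: the sum over integers `a ≤ k ≤ b`,
omitting `k = 0`, where the end terms `k = a` and `k = b` carry weight `1/2`. -/
noncomputable def dsum (a b : ℤ) (g : ℤ → ℝ) : ℝ :=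
  ∑ k ∈ (Finset.Icc a b).erase 0, (if k = a ∨ k = b then (1 : ℝ) / 2 else 1) * g k


/-! Bounding the end weights `1/2` by `1`, the double-primed sum splits into two one-sided sums
`∑_{k=1}^{N} |k h|^{-(1+α)}` with `N = J ± j`. Comparing `k^{-(1+α)}` with the increments of
`k^{-α}/α` bounds each of them by `h^{-(1+α)} (1 + 1/α - N^{-α}/α)`, and the `N^{-α}` terms
cancel exactly against the boundary terms `(1 ± j h)^{-α} = ((J ± j) h)^{-α}`. What remains is
`1 - 2 Δt ε C_α (1 + 1/α - ζ(α-1)) h^{-α}`, which is nonnegative by the CFL condition. -/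

open Finset

lemma Cconst_pos {α : ℝ} (hα : 0 < α) (hα2 : α < 2) : 0 < Cconst α := by
  have hΓ₁ : 0 < Real.Gamma ((1 + α) / 2) := Real.Gamma_pos_of_pos (by linarith)
  have hΓ₂ : 0 < Real.Gamma (1 - α / 2) := Real.Gamma_pos_of_pos (by linarith)
  unfold Cconst
  positivity

/-- The mean value theorem for `t ↦ t ^ (-α)` on `[x, x + 1]`. -/
lemma mul_rpow_neg_succ_le_sub {α x : ℝ} (hα : 0 ≤ α) (hx : 0 < x) :
    α * (x + 1) ^ (-(1 + α)) ≤ x ^ (-α) - (x + 1) ^ (-α) := by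
  obtain ⟨c, ⟨hxc, hcx⟩, hc⟩ := exists_hasDerivAt_eq_slope (fun t => t ^ (-α))
    (fun t => -α * t ^ (-α - 1)) (lt_add_one x)
    (fun t ht =>
      (Real.continuousAt_rpow_const t (-α) (Or.inl (by linarith [ht.1]))).continuousWithinAt)
    (fun t ht => Real.hasDerivAt_rpow_const (Or.inl (by linarith [ht.1])))
  have hmono : (x + 1) ^ (-α - 1) ≤ c ^ (-α - 1) :=
    Real.rpow_le_rpow_of_nonpos (by linarith) hcx.le (by linarith)
  rw [add_sub_cancel_left, div_one] at hc
  rw [show -(1 + α) = -α - 1 by ring]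
  nlinarith

lemma sum_Icc_rpow_neg_succ_le {α : ℝ} (hα : 0 < α) {N : ℤ} (hN : 1 ≤ N) :
    ∑ k ∈ Icc 1 N, (k : ℝ) ^ (-(1 + α)) ≤ 1 + 1 / α - (N : ℝ) ^ (-α) / α := by
  induction N, hN using Int.leInduction with
  | base => simp
  | succ N hN ih =>
    have hstep := mul_rpow_neg_succ_le_sub hα.le (by exact_mod_cast hN : (0 : ℝ) < N)
    have hlast :
        (N + 1 : ℝ) ^ (-(1 + α)) ≤ ((N : ℝ) ^ (-α) - (N + 1 : ℝ) ^ (-α)) / α := by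
      rw [le_div_iff₀ hα]; linarith
    rw [← insert_Icc_right_eq_Icc_add_one (by omega), sum_insert (by simp)]
    push_cast
    linarith [div_sub_div_same ((N : ℝ) ^ (-α)) ((N + 1 : ℝ) ^ (-α)) α]

lemma mul_sum_Icc_inv_abs_mul_rpow_le {α h : ℝ} (hα : 0 < α) (hh : 0 < h) {N : ℤ}
    (hN : 1 ≤ N) :
    h * ∑ k ∈ Icc 1 N, 1 / |(k : ℝ) * h| ^ (1 + α) ≤
      (1 + 1 / α) * h ^ (-α) - ((N : ℝ) * h) ^ (-α) / α := by
  have hterm : ∀ k ∈ Icc 1 N,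
      1 / |(k : ℝ) * h| ^ (1 + α) = (k : ℝ) ^ (-(1 + α)) * h ^ (-(1 + α)) := by
    intro k hk
    have hk : (0 : ℝ) ≤ k := by exact_mod_cast (by grind : (0 : ℤ) ≤ k)
    rw [abs_of_nonneg (by positivity), Real.mul_rpow hk hh.le, Real.rpow_neg hk,
      Real.rpow_neg hh.le, one_div, mul_inv]
  have hscale : h * h ^ (-(1 + α)) = h ^ (-α) := by
    rw [← Real.rpow_one_add' hh.le (by linarith)]; ring_nf
  have hN0 : (0 : ℝ) ≤ N := by exact_mod_cast (by omega : (0 : ℤ) ≤ N)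
  rw [sum_congr rfl hterm, ← sum_mul, Real.mul_rpow hN0 hh.le]
  calc h * ((∑ k ∈ Icc 1 N, (k : ℝ) ^ (-(1 + α))) * h ^ (-(1 + α)))
      = (∑ k ∈ Icc 1 N, (k : ℝ) ^ (-(1 + α))) * h ^ (-α) := by rw [← hscale]; ring
    _ ≤ (1 + 1 / α - (N : ℝ) ^ (-α) / α) * h ^ (-α) := by
      gcongr; exact sum_Icc_rpow_neg_succ_le hα hN
    _ = _ := by ring

lemma dsum_le_sum_erase_zero {a b : ℤ} {g : ℤ → ℝ} (hg : ∀ k, 0 ≤ g k) :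
    dsum a b g ≤ ∑ k ∈ (Icc a b).erase 0, g k := by
  refine sum_le_sum fun k _ => ?_
  have := hg k
  split_ifs <;> linarith

lemma sum_Icc_neg_erase_zero {M : Type*} [AddCommMonoid M] {m n : ℤ} (hm : 0 ≤ m) (hn : 0 ≤ n)
    (f : ℤ → M) :
    ∑ k ∈ (Icc (-m) n).erase 0, f k = ∑ k ∈ Icc 1 m, f (-k) + ∑ k ∈ Icc 1 n, f k := by
  have hsplit : (Icc (-m) n).erase 0 = (Icc 1 m).map (Equiv.neg ℤ).toEmbedding ∪ Icc 1 n := by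
    ext k; simp; omega
  rw [hsplit, sum_union (disjoint_left.2 fun k hk hk' => by simp at hk hk'; omega), sum_map]
  rfl

lemma mul_dsum_inv_abs_mul_rpow_le {α h : ℝ} (hα : 0 < α) (hh : 0 < h) {m n : ℤ}
    (hm : 1 ≤ m) (hn : 1 ≤ n) :
    h * dsum (-m) n (fun k => 1 / |(k : ℝ) * h| ^ (1 + α)) ≤
      2 * (1 + 1 / α) * h ^ (-α) - (((m : ℝ) * h) ^ (-α) + ((n : ℝ) * h) ^ (-α)) / α := by
  have hdsum := dsum_le_sum_erase_zero (a := -m) (b := n)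
    (g := fun k => 1 / |(k : ℝ) * h| ^ (1 + α)) fun k => by positivity
  rw [sum_Icc_neg_erase_zero (by omega) (by omega)] at hdsum
  simp only [Int.cast_neg, neg_mul, abs_neg] at hdsum
  have hsum_m := mul_sum_Icc_inv_abs_mul_rpow_le hα hh hm
  have hsum_n := mul_sum_Icc_inv_abs_mul_rpow_le hα hh hn
  rw [add_div]
  nlinarith

lemma mul_le_of_div_le_one_div {x y z : ℝ} (hx : 0 < x) (hy : 0 < y) (h : x / y ≤ 1 / z) :
    x * z ≤ y := by
  have hz : 0 < z := one_div_pos.mp ((div_pos hx hy).trans_le h)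
  rwa [div_le_div_iff₀ hy hz, one_mul] at h

/-- Nonnegativity of the diagonal coefficient of the explicit Euler absorbing scheme
under the CFL-type condition. -/
theorem stmt_7 (α ε h Δt : ℝ) (J : ℤ)
    (hα : 0 < α) (hα2 : α < 2) (hε : 0 < ε) (hJ : 1 ≤ J)
    (hh : h = 1 / (J : ℝ)) (hΔt : 0 < Δt)
    (hCFL : Δt / h ^ α ≤ 1 / (2 * ε * Cconst α * (1 + 1 / α - zetaR (α - 1)))) :
    ∀ j : ℤ, |j| < J →
      0 ≤ 1 + 2 * Δt * ε * Cconst α * zetaR (α - 1) * h ^ (-α)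
          - Δt * ε * Cconst α / α *
              ((1 + (j : ℝ) * h) ^ (-α) + (1 - (j : ℝ) * h) ^ (-α))
          - Δt * ε * Cconst α * h *
              dsum (-J - j) (J - j) (fun k => 1 / |(k : ℝ) * h| ^ (1 + α)) := by
  intro j hj
  obtain ⟨hjl, hjr⟩ := abs_lt.mp hj
  have hJ0 : (0 : ℝ) < J := by exact_mod_cast (by omega : (0 : ℤ) < J)
  have hh0 : 0 < h := by rw [hh]; positivity
  have hcoef : 0 ≤ Δt * ε * Cconst α := by have := Cconst_pos hα hα2; positivity
  have hCFL_scaled :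
      Δt * (2 * ε * Cconst α * (1 + 1 / α - zetaR (α - 1))) * h ^ (-α) ≤ 1 := by
    rw [Real.rpow_neg hh0.le, ← div_eq_mul_inv, div_le_one (by positivity)]
    exact mul_le_of_div_le_one_div hΔt (by positivity) hCFL
  have hplus : 1 + (j : ℝ) * h = ((J + j : ℤ) : ℝ) * h := by rw [hh]; push_cast; field_simp
  have hminus : 1 - (j : ℝ) * h = ((J - j : ℤ) : ℝ) * h := by rw [hh]; push_cast; field_simp
  have hsum := mul_dsum_inv_abs_mul_rpow_le hα hh0 (m := J + j) (n := J - j) (by omega) (by omega)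
  rw [← neg_add', hplus, hminus]
  linear_combination hCFL_scaled + (Δt * ε * Cconst α) * hsum
end

section
/- Under the CFL-type condition Δt/h^α ≤ 1/(2 ε C_α (1 + 1/α − ζ(α−1))), the explicit Euler scheme for the natural condition satisfies a discrete comparison principle: for every n ≥ 0 and every j with |j| < J, min_{|k| ≤ J} P^n_k ≤ P^{n+1}_j ≤ max_{|k| ≤ J} P^n_k (because P^{n+1}_j is a convex combination of the values {P^n_k : |k| ≤ J}: the stencil coefficients are nonnegative and sum exactly to 1). -/
open scoped BigOperators

/-!
The update is `P^{n+1}_j = P^n_j + ∑ₖ wₖ (P^n_{j+k} - P^n_j)` over the stencil `k ≠ 0`,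
`|j + k| ≤ J`, so the new value is a convex combination of old ones as soon as `wₖ ≥ 0` and
`∑ₖ wₖ ≤ 1`. The nearest-neighbour part `-Δt ε C_α ζ(α - 1) h^(-α)` is nonnegative because
`ζ ≤ 0` on `[-2, 1)`: on `(0, 1)` write `ζ(s) = η(s) / (1 - 2^(1-s))` with the Dirichlet eta
function `η(s) = ∑ (2k+1)^(-s) - (2k+2)^(-s)`, which is analytic for `Re s > 0` and nonnegative
on the positive reals; on `[-2, 0)` use the functional equation. Comparing `∑_{k ≥ 1} k^(-1-α)`
with `1 + ∫₁^∞ x^(-1-α) dx` bounds the fractional weights by `2 (1 + 1/α) h^(-α)`, and the CFL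
condition is then exactly `∑ₖ wₖ ≤ 1`.
-/

section

open Complex Set Topology
open scoped ComplexOrder Real

noncomputable def dirichletEta (s : ℂ) : ℂ :=
  ∑' k : ℕ, (((2 * k + 1 : ℕ) : ℂ) ^ (-s) - ((2 * k + 2 : ℕ) : ℂ) ^ (-s))

lemma norm_ofReal_cpow_neg_sub_cpow_neg_le {a : ℝ} (ha : 0 < a) {s : ℂ} (hs : -1 ≤ s.re) :
    ‖(a : ℂ) ^ (-s) - ((a + 1 : ℝ) : ℂ) ^ (-s)‖ ≤ ‖s‖ * a ^ (-1 - s.re) := by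
  have hderiv : ∀ t ∈ Icc a (a + 1),
      HasDerivWithinAt (fun t : ℝ => (t : ℂ) ^ (-s)) (-s * (t : ℂ) ^ (-s - 1)) (Icc a (a + 1)) t :=
    fun t ht => ((hasDerivAt_id (t : ℂ)).cpow_const
      (ofReal_mem_slitPlane.2 (ha.trans_le ht.1))).comp_ofReal.hasDerivWithinAt |>.congr_deriv
        (by simp)
  have hbound : ∀ t ∈ Ico a (a + 1), ‖-s * (t : ℂ) ^ (-s - 1)‖ ≤ ‖s‖ * a ^ (-1 - s.re) := by
    intro t ht
    have ht0 : 0 < t := ha.trans_le ht.1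
    have hre : (-s - 1).re = -1 - s.re := by simp only [sub_re, neg_re, one_re]; ring
    rw [norm_mul, norm_neg, norm_cpow_eq_rpow_re_of_pos ht0, hre]
    exact mul_le_mul_of_nonneg_left (Real.rpow_le_rpow_of_nonpos ha ht.1 (by linarith))
      (norm_nonneg s)
  rw [norm_sub_rev]
  simpa using norm_image_sub_le_of_norm_deriv_le_segment' hderiv hbound (a + 1)
    (right_mem_Icc.2 (by linarith))

lemma differentiableOn_dirichletEta {σ R : ℝ} (hσ : 0 < σ) :
    DifferentiableOn ℂ dirichletEta {s | σ < s.re ∧ ‖s‖ < R} := by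
  have hsum : Summable fun k : ℕ => R * ((k : ℝ) + 1) ^ (-1 - σ) := by
    refine Summable.mul_left R ?_
    simpa using (summable_nat_add_iff 1).2 (Real.summable_nat_rpow.2 (by linarith : -1 - σ < -1))
  refine Complex.differentiableOn_tsum_of_summable_norm hsum (fun k => ?_) ?_ ?_
  · exact (((differentiable_neg).const_cpow (Or.inl (by positivity))).sub
      ((differentiable_neg).const_cpow (Or.inl (by positivity)))).differentiableOn
  · exact (isOpen_lt continuous_const continuous_re).inter
      (isOpen_lt continuous_norm continuous_const)
  · rintro k s ⟨hσs, hR⟩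
    have hk : (0 : ℝ) ≤ k := k.cast_nonneg
    have h := norm_ofReal_cpow_neg_sub_cpow_neg_le (a := 2 * k + 1) (by positivity) (s := s)
      (by linarith)
    push_cast at h ⊢
    rw [show (2 * (k : ℂ) + 1 + 1) = 2 * k + 2 by ring] at h
    refine h.trans (mul_le_mul hR.le ?_ (by positivity) (by linarith [norm_nonneg s]))
    calc (2 * (k : ℝ) + 1) ^ (-1 - s.re) ≤ ((k : ℝ) + 1) ^ (-1 - s.re) :=
          Real.rpow_le_rpow_of_nonpos (by positivity) (by linarith) (by linarith)
      _ ≤ ((k : ℝ) + 1) ^ (-1 - σ) :=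
          Real.rpow_le_rpow_of_exponent_le (by linarith) (by linarith)

lemma analyticOnNhd_dirichletEta : AnalyticOnNhd ℂ dirichletEta {s | 0 < s.re} := by
  intro s (hs : 0 < s.re)
  have hU : IsOpen {z : ℂ | s.re / 2 < z.re ∧ ‖z‖ < ‖s‖ + 1} :=
    (isOpen_lt continuous_const continuous_re).inter (isOpen_lt continuous_norm continuous_const)
  exact (differentiableOn_dirichletEta (half_pos hs)).analyticAt
    (hU.mem_nhds ⟨half_lt_self hs, lt_add_one _⟩)

lemma dirichletEta_eq_mul_riemannZeta_of_one_lt_re {s : ℂ} (hs : 1 < s.re) :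
    dirichletEta s = (1 - 2 ^ (1 - s)) * riemannZeta s := by
  set f : ℕ → ℂ := fun n => ((n : ℂ) + 1) ^ (-s)
  have hζ : riemannZeta s = ∑' n, f n := by
    simp only [zeta_eq_tsum_one_div_nat_add_one_cpow hs, f, cpow_neg, one_div]
  have hf : Summable f := by
    simpa [f, cpow_neg] using (summable_nat_add_iff 1).2 (Complex.summable_one_div_nat_cpow.2 hs)
  have hodd : ∑' k, f (2 * k + 1) = 2 ^ (-s) * riemannZeta s := by
    rw [hζ, ← tsum_mul_left]
    refine tsum_congr fun k => ?_
    have h2 : ((2 * k + 1 : ℕ) : ℂ) + 1 = ((2 : ℝ) : ℂ) * (((k : ℝ) + 1 : ℝ) : ℂ) := by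
      push_cast; ring
    simp only [f, h2, mul_cpow_ofReal_nonneg zero_le_two (by positivity : (0 : ℝ) ≤ k + 1)]
    push_cast; rfl
  have he : Summable fun k => f (2 * k) :=
    hf.comp_injective (mul_right_injective₀ two_ne_zero)
  have ho : Summable fun k => f (2 * k + 1) := hf.comp_injective fun m n h => by simpa using h
  have hη : dirichletEta s = ∑' k, f (2 * k) - ∑' k, f (2 * k + 1) := by
    rw [← he.tsum_sub ho]
    refine tsum_congr fun k => ?_
    simp only [f]; push_cast; ring_nf
  have h2s : (2 : ℂ) ^ (1 - s) = 2 * 2 ^ (-s) := by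
    rw [sub_eq_add_neg, cpow_add _ _ two_ne_zero, cpow_one]
  rw [hη, h2s]
  linear_combination tsum_even_add_odd he ho - hζ - 2 * hodd

lemma dirichletEta_eq_mul_riemannZeta_of_re_lt_one {s : ℂ} (h0 : 0 < s.re) (h1 : s.re < 1) :
    dirichletEta s = (1 - 2 ^ (1 - s)) * riemannZeta s := by
  -- Strip ∪ quadrant: preconnected, avoids the pole at 1, and meets the half-plane `1 < re`.
  set A := {z : ℂ | 0 < z.re} ∩ {z | z.re < 1}
  set B := {z : ℂ | 0 < z.re} ∩ {z | 0 < z.im}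
  have hAB : IsPreconnected (A ∪ B) :=
    IsPreconnected.union (1 / 2 + I) (by norm_num [A]) (by norm_num [B])
      ((convex_halfSpace_re_gt 0).inter (convex_halfSpace_re_lt 1)).isPreconnected
      ((convex_halfSpace_re_gt 0).inter (convex_halfSpace_im_gt 0)).isPreconnected
  have hpos : A ∪ B ⊆ {z | 0 < z.re} := union_subset inter_subset_left inter_subset_left
  have hζ : AnalyticOnNhd ℂ riemannZeta {1}ᶜ :=
    DifferentiableOn.analyticOnNhd
      (fun w hw => (differentiableAt_riemannZeta hw).differentiableWithinAt)
      isOpen_compl_singleton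
  have hF : AnalyticOnNhd ℂ (fun z => (1 - 2 ^ (1 - z)) * riemannZeta z) (A ∪ B) := by
    refine fun z hz => AnalyticAt.mul ?_ (hζ z ?_)
    · exact ((differentiable_const _).sub ((differentiable_const _).sub differentiable_id
        |>.const_cpow (Or.inl two_ne_zero))).analyticAt z
    · rintro rfl
      rcases hz with ⟨-, h⟩ | ⟨-, h⟩ <;> norm_num at h
  have hev : dirichletEta =ᶠ[𝓝 (2 + I)] fun z => (1 - 2 ^ (1 - z)) * riemannZeta z :=
    Filter.eventuallyEq_of_mem ((isOpen_lt continuous_const continuous_re).mem_nhds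
      (by norm_num : (1 : ℝ) < (2 + I).re))
      fun z hz => dirichletEta_eq_mul_riemannZeta_of_one_lt_re hz
  exact (analyticOnNhd_dirichletEta.mono hpos).eqOn_of_preconnected_of_eventuallyEq hF hAB
    (Or.inr (by norm_num [B])) hev (Or.inl ⟨h0, h1⟩)

lemma dirichletEta_ofReal_nonneg {x : ℝ} (hx : 0 ≤ x) : 0 ≤ dirichletEta x := by
  have hreal : dirichletEta x =
      ↑(∑' k : ℕ, (((2 * k + 1 : ℕ) : ℝ) ^ (-x) - ((2 * k + 2 : ℕ) : ℝ) ^ (-x))) := by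
    rw [dirichletEta, ofReal_tsum]
    refine tsum_congr fun k => ?_
    rw [ofReal_sub, ofReal_cpow (by positivity), ofReal_cpow (by positivity)]
    push_cast; rfl
  rw [hreal, zero_le_real]
  exact tsum_nonneg fun k => sub_nonneg.2 <|
    Real.rpow_le_rpow_of_nonpos (by positivity) (by gcongr; omega) (by linarith)

lemma riemannZeta_nonpos_of_mem_Ioo {x : ℝ} (h0 : 0 < x) (h1 : x < 1) : riemannZeta x ≤ 0 := by
  have hd : (1 : ℂ) - 2 ^ (1 - (x : ℂ)) = ↑(1 - (2 : ℝ) ^ (1 - x)) := by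
    rw [ofReal_sub, ofReal_cpow zero_le_two]; push_cast; rfl
  have hd_neg : 1 - (2 : ℝ) ^ (1 - x) < 0 :=
    sub_neg.2 (Real.one_lt_rpow one_lt_two (by linarith))
  have hη := dirichletEta_eq_mul_riemannZeta_of_re_lt_one (s := x) (by simpa) (by simpa)
  rw [hd] at hη
  have hζ : riemannZeta x = ↑(1 - (2 : ℝ) ^ (1 - x))⁻¹ * dirichletEta x := by
    rw [hη, ofReal_inv, inv_mul_cancel_left₀ (ofReal_ne_zero.2 hd_neg.ne)]
  rw [hζ]
  exact mul_nonpos_of_nonpos_of_nonneg (by exact_mod_cast (inv_neg''.2 hd_neg).le)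
    (dirichletEta_ofReal_nonneg h0.le)

lemma riemannZeta_nonpos_of_mem_Ico {x : ℝ} (h₁ : -2 ≤ x) (h₂ : x < 0) : riemannZeta x ≤ 0 := by
  set s : ℝ := 1 - x
  have hfe := riemannZeta_one_sub (s := s)
    (fun n hn => by
      have := congrArg re hn
      simp only [ofReal_re, neg_re, natCast_re] at this
      linarith [n.cast_nonneg (α := ℝ)])
    (fun hn => by
      have := congrArg re hn
      simp only [ofReal_re, one_re] at this
      linarith)
  have hcos : Real.cos (π * s / 2) ≤ 0 :=
    Real.cos_nonpos_of_pi_div_two_le_of_le (by nlinarith [Real.pi_pos]) (by nlinarith [Real.pi_pos])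
  have hreal : riemannZeta x =
      ↑(2 * (2 * π) ^ (-s) * Real.Gamma s * Real.cos (π * s / 2)) * riemannZeta s := by
    rw [show (x : ℂ) = 1 - s by push_cast [s]; ring, hfe, Gamma_ofReal]
    push_cast [ofReal_cpow (by positivity : 0 ≤ 2 * π)]
    ring
  rw [hreal]
  refine mul_nonpos_of_nonpos_of_nonneg ?_ (riemannZeta_pos_of_one_lt (by linarith)).le
  have := Real.Gamma_pos_of_pos (by linarith : 0 < s)
  exact_mod_cast mul_nonpos_of_nonneg_of_nonpos (by positivity) hcos

lemma riemannZeta_nonpos {x : ℝ} (h₁ : -2 ≤ x) (h₂ : x < 1) : riemannZeta x ≤ 0 := by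
  rcases lt_trichotomy x 0 with hx | rfl | hx
  · exact riemannZeta_nonpos_of_mem_Ico h₁ hx
  · rw [ofReal_zero, riemannZeta_zero, neg_div, neg_nonpos]
    exact_mod_cast one_half_pos.le
  · exact riemannZeta_nonpos_of_mem_Ioo hx h₂

end

lemma Cconst_pos_s19 {α : ℝ} (h₀ : 0 < α) (h₂ : α < 2) : 0 < Cconst α := by
  have := Real.Gamma_pos_of_pos (by linarith : 0 < (1 + α) / 2)
  have := Real.Gamma_pos_of_pos (by linarith : 0 < 1 - α / 2)
  unfold Cconst
  positivity

open Finset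

lemma sum_range_rpow_neg_le {α : ℝ} (hα : 0 < α) (N : ℕ) :
    ∑ i ∈ range N, ((i : ℝ) + 1) ^ (-(1 + α)) ≤ 1 + 1 / α := by
  cases N with
  | zero => simp; positivity
  | succ m =>
    have hanti : AntitoneOn (fun x : ℝ => x ^ (-(1 + α))) (Set.Icc 1 (1 + m)) :=
      fun x hx y _ hxy => Real.rpow_le_rpow_of_nonpos (by linarith [hx.1]) hxy (by linarith)
    have hint : ∫ x in (1 : ℝ)..1 + m, x ^ (-(1 + α)) = (1 - (1 + m : ℝ) ^ (-α)) / α := by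
      rw [integral_rpow (Or.inr ⟨by linarith, fun h => by
        rw [Set.uIcc_of_le (by simp)] at h; linarith [h.1]⟩),
        show -(1 + α) + 1 = -α by ring, Real.one_rpow]
      field_simp
      ring
    have htail := hanti.sum_le_integral
    rw [hint] at htail
    have : (1 - (1 + m : ℝ) ^ (-α)) / α ≤ 1 / α := by
      gcongr; linarith [Real.rpow_nonneg (by positivity : (0 : ℝ) ≤ 1 + m) (-α)]
    rw [sum_range_succ', Nat.cast_zero, zero_add, Real.one_rpow]
    simp only [add_comm _ (1 : ℝ)] at htail ⊢
    linarith

lemma sum_rpow_neg_le {α : ℝ} (hα : 0 < α) {s : Finset ℕ} (hs : 0 ∉ s) :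
    ∑ n ∈ s, (n : ℝ) ^ (-(1 + α)) ≤ 1 + 1 / α := by
  have hsub : s ⊆ (range (s.sup id)).image (fun i : ℕ => i + 1) := by
    intro n hn
    have hle : n ≤ s.sup id := le_sup (f := id) hn
    have hn0 : n ≠ 0 := ne_of_mem_of_not_mem hn hs
    exact mem_image.2 ⟨n - 1, mem_range.2 (by omega), by omega⟩
  calc ∑ n ∈ s, (n : ℝ) ^ (-(1 + α))
      ≤ ∑ n ∈ (range (s.sup id)).image (fun i : ℕ => i + 1), (n : ℝ) ^ (-(1 + α)) :=
        sum_le_sum_of_subset_of_nonneg hsub fun _ _ _ => by positivity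
    _ = ∑ i ∈ range (s.sup id), ((i : ℝ) + 1) ^ (-(1 + α)) := by
        rw [sum_image fun _ _ _ _ h => by simpa using h]; push_cast; rfl
    _ ≤ 1 + 1 / α := sum_range_rpow_neg_le hα _

lemma sum_abs_rpow_neg_le {α : ℝ} (hα : 0 < α) {s : Finset ℤ} (hs : 0 ∉ s) :
    ∑ k ∈ s, |(k : ℝ)| ^ (-(1 + α)) ≤ 2 * (1 + 1 / α) := by
  have habs : ∀ k : ℤ, |(k : ℝ)| = (k.natAbs : ℝ) := fun k => by
    rw [Nat.cast_natAbs, Int.cast_abs]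
  have hfiber : ∀ n : ℕ, #{k ∈ s | k.natAbs = n} ≤ 2 := fun n =>
    (card_le_card fun k hk => by
      rcases Int.natAbs_eq_iff.1 (mem_filter.1 hk).2 with rfl | rfl <;> simp).trans
      (card_le_two (a := (n : ℤ)) (b := -n))
  have h0 : 0 ∉ s.image Int.natAbs := by simpa using hs
  simp_rw [habs]
  rw [sum_comp (fun n : ℕ => (n : ℝ) ^ (-(1 + α))) Int.natAbs]
  calc ∑ n ∈ s.image Int.natAbs, #{k ∈ s | k.natAbs = n} • (n : ℝ) ^ (-(1 + α))
      ≤ ∑ n ∈ s.image Int.natAbs, 2 * (n : ℝ) ^ (-(1 + α)) := by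
        refine sum_le_sum fun n _ => ?_
        rw [nsmul_eq_mul]
        gcongr
        exact_mod_cast hfiber n
    _ ≤ 2 * (1 + 1 / α) := by rw [← mul_sum]; gcongr; exact sum_rpow_neg_le hα h0

lemma add_sum_mul_sub_mem_Icc {ι : Type*} {s : Finset ι} {w y : ι → ℝ} {x m M : ℝ}
    (hw : ∀ i ∈ s, 0 ≤ w i) (hw₁ : ∑ i ∈ s, w i ≤ 1) (hx : x ∈ Set.Icc m M)
    (hy : ∀ i ∈ s, y i ∈ Set.Icc m M) :
    x + ∑ i ∈ s, w i * (y i - x) ∈ Set.Icc m M := by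
  have hshift : ∀ c, x + ∑ i ∈ s, w i * (y i - x) - c
      = (1 - ∑ i ∈ s, w i) * (x - c) + ∑ i ∈ s, w i * (y i - c) := fun c => by
    simp only [mul_sub, sum_sub_distrib, ← sum_mul]; ring
  constructor
  · have := hshift m
    have : 0 ≤ ∑ i ∈ s, w i * (y i - m) :=
      sum_nonneg fun i hi => mul_nonneg (hw i hi) (sub_nonneg.2 (hy i hi).1)
    nlinarith [hx.1]
  · have := hshift M
    have : ∑ i ∈ s, w i * (y i - M) ≤ 0 :=
      sum_nonpos fun i hi => mul_nonpos_of_nonneg_of_nonpos (hw i hi) (sub_nonpos.2 (hy i hi).2)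
    nlinarith [hx.2]
lemma sum_ite_neg_one_or_one_mul {K : Finset ℤ} (hneg : -1 ∈ K) (hpos : 1 ∈ K) (X : ℝ)
    (f : ℤ → ℝ) : ∑ k ∈ K, (if k = -1 ∨ k = 1 then X else 0) * f k = X * (f (-1) + f 1) := by
  rw [sum_eq_add_of_mem (-1) 1 hneg hpos (by norm_num) fun k _ hk => by simp [hk.1, hk.2]]
  simp only [true_or, or_true, if_true]
  ring

lemma neg_one_mem_and_one_mem {J j : ℤ} (hj : |j| < J) :
    -1 ∈ (Icc (-J - j) (J - j)).erase 0 ∧ 1 ∈ (Icc (-J - j) (J - j)).erase 0 := by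
  rw [abs_lt] at hj
  simp only [mem_erase, mem_Icc]
  omega

-- The coefficient of `P n (j + k) - P n j` in the scheme: the weighted fractional-sum term, plus
-- the weight `-ζ(α - 1) h^(-α)` of the discrete Laplacian on the two nearest neighbours.
noncomputable def stencilWeight (α ε h Δt : ℝ) (J j k : ℤ) : ℝ :=
  Δt * ε * Cconst α *
    (h * (if k = -J - j ∨ k = J - j then 1 / 2 else 1) / |(k : ℝ) * h| ^ (1 + α)
      - if k = -1 ∨ k = 1 then zetaR (α - 1) * h ^ (-α) else 0)

section Scheme

variable {α ε h Δt : ℝ} {J : ℤ}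

lemma scheme_eq_add_sum_stencilWeight {j : ℤ} (hj : |j| < J) (p : ℤ → ℝ) :
    p j - Δt * ε * Cconst α * zetaR (α - 1) * h ^ (-α) * (p (j - 1) - 2 * p j + p (j + 1))
      + Δt * ε * Cconst α * h *
          dsum (-J - j) (J - j) (fun k => (p (j + k) - p j) / |(k : ℝ) * h| ^ (1 + α))
    = p j + ∑ k ∈ (Icc (-J - j) (J - j)).erase 0,
        stencilWeight α ε h Δt J j k * (p (j + k) - p j) := by
  have hnbr := sum_ite_neg_one_or_one_mul (neg_one_mem_and_one_mem hj).1
    (neg_one_mem_and_one_mem hj).2 (zetaR (α - 1) * h ^ (-α)) fun k => p (j + k) - p j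
  have hsum : ∑ k ∈ (Icc (-J - j) (J - j)).erase 0,
        stencilWeight α ε h Δt J j k * (p (j + k) - p j)
      = Δt * ε * Cconst α * h *
          dsum (-J - j) (J - j) (fun k => (p (j + k) - p j) / |(k : ℝ) * h| ^ (1 + α))
        - Δt * ε * Cconst α *
            (zetaR (α - 1) * h ^ (-α) * ((p (j + -1) - p j) + (p (j + 1) - p j))) := by
    rw [← hnbr, dsum, mul_sum, mul_sum, ← sum_sub_distrib]
    refine sum_congr rfl fun k _ => ?_
    simp only [stencilWeight]
    ring
  rw [hsum, ← sub_eq_add_neg]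
  ring

lemma stencilWeight_nonneg (hcoef : 0 ≤ Δt * ε * Cconst α) (hh : 0 ≤ h) (hζ : zetaR (α - 1) ≤ 0)
    (J j k : ℤ) : 0 ≤ stencilWeight α ε h Δt J j k := by
  have hfrac : 0 ≤ h * (if k = -J - j ∨ k = J - j then 1 / 2 else 1) / |(k : ℝ) * h| ^ (1 + α) :=
    div_nonneg (mul_nonneg hh (by split_ifs <;> norm_num)) (by positivity)
  have hnbr : (if k = -1 ∨ k = 1 then zetaR (α - 1) * h ^ (-α) else 0) ≤ 0 := by
    split_ifs
    exacts [mul_nonpos_of_nonpos_of_nonneg hζ (Real.rpow_nonneg hh _), le_rfl]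
  exact mul_nonneg hcoef (by linarith)

lemma mul_div_abs_mul_rpow_le (hh : 0 < h) {c : ℝ} (hc : c ≤ 1) {k : ℤ}
    (hk : k ≠ 0) : h * c / |(k : ℝ) * h| ^ (1 + α) ≤ |(k : ℝ)| ^ (-(1 + α)) * h ^ (-α) := by
  have hk' : 0 < |(k : ℝ)| := by positivity
  rw [abs_mul, abs_of_pos hh, Real.mul_rpow hk'.le hh.le, Real.rpow_add hh, Real.rpow_one,
    Real.rpow_neg hk'.le, Real.rpow_neg hh.le, ← mul_inv]
  rw [show h * c / (|(k : ℝ)| ^ (1 + α) * (h * h ^ α)) = c / (|(k : ℝ)| ^ (1 + α) * h ^ α) by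
    field_simp]
  rw [div_eq_mul_inv]
  exact mul_le_of_le_one_left (by positivity) hc

lemma sum_stencilWeight_le_one (hα : 0 < α) (hε : 0 < ε) (hC : 0 < Cconst α) (hΔt : 0 ≤ Δt)
    (hh : 0 < h) (hζ : zetaR (α - 1) ≤ 0)
    (hCFL : Δt / h ^ α ≤ 1 / (2 * ε * Cconst α * (1 + 1 / α - zetaR (α - 1))))
    {j : ℤ} (hj : |j| < J) :
    ∑ k ∈ (Icc (-J - j) (J - j)).erase 0, stencilWeight α ε h Δt J j k ≤ 1 := by
  set K := (Icc (-J - j) (J - j)).erase 0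
  have hfrac : ∑ k ∈ K, h * (if k = -J - j ∨ k = J - j then 1 / 2 else 1) / |(k : ℝ) * h| ^ (1 + α)
      ≤ 2 * (1 + 1 / α) * h ^ (-α) := calc
    _ ≤ ∑ k ∈ K, |(k : ℝ)| ^ (-(1 + α)) * h ^ (-α) := sum_le_sum fun k hk =>
        mul_div_abs_mul_rpow_le hh (by split_ifs <;> norm_num)
          (ne_of_mem_erase hk)
    _ ≤ 2 * (1 + 1 / α) * h ^ (-α) := by
        rw [← sum_mul]; gcongr; exact sum_abs_rpow_neg_le hα (notMem_erase 0 _)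
  have hnbr := sum_ite_neg_one_or_one_mul (neg_one_mem_and_one_mem hj).1
    (neg_one_mem_and_one_mem hj).2 (zetaR (α - 1) * h ^ (-α)) fun _ => 1
  simp only [mul_one] at hnbr
  have hD : 0 < 2 * ε * Cconst α * (1 + 1 / α - zetaR (α - 1)) := by
    have : 0 < 1 / α := by positivity
    have : 0 < 1 + 1 / α - zetaR (α - 1) := by linarith
    positivity
  have hcfl : Δt * h ^ (-α) * (2 * ε * Cconst α * (1 + 1 / α - zetaR (α - 1))) ≤ 1 := by
    rw [Real.rpow_neg hh.le, ← div_eq_mul_inv]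
    exact (le_div_iff₀ hD).1 hCFL
  calc ∑ k ∈ K, stencilWeight α ε h Δt J j k
      = Δt * ε * Cconst α * (∑ k ∈ K, h * (if k = -J - j ∨ k = J - j then 1 / 2 else 1) /
          |(k : ℝ) * h| ^ (1 + α) - zetaR (α - 1) * h ^ (-α) * (1 + 1)) := by
        rw [← hnbr, ← sum_sub_distrib, mul_sum]; rfl
    _ ≤ Δt * ε * Cconst α * (2 * (1 + 1 / α) * h ^ (-α) - zetaR (α - 1) * h ^ (-α) * (1 + 1)) := by
        gcongr
    _ = Δt * h ^ (-α) * (2 * ε * Cconst α * (1 + 1 / α - zetaR (α - 1))) := by ring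
    _ ≤ 1 := hcfl

end Scheme

/-- Discrete comparison principle for the explicit Euler scheme with the natural
condition: each new interior value lies between the min and max of the previous
values over `{k : |k| ≤ J}`. -/
theorem stmt_19 (α ε h Δt : ℝ) (J : ℤ)
    (hα : 0 < α) (hα2 : α < 2) (hε : 0 < ε) (hJ : 1 ≤ J)
    (hh : 0 < h) (hΔt : 0 < Δt)
    (P : ℕ → ℤ → ℝ)
    (hscheme : ∀ n : ℕ, ∀ j : ℤ, |j| < J →
      P (n + 1) j =
        P n j
          - Δt * ε * Cconst α * zetaR (α - 1) * h ^ (-α) *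
              (P n (j - 1) - 2 * P n j + P n (j + 1))
          + Δt * ε * Cconst α * h *
              dsum (-J - j) (J - j)
                (fun k => (P n (j + k) - P n j) / |(k : ℝ) * h| ^ (1 + α)))
    (hCFL : Δt / h ^ α ≤ 1 / (2 * ε * Cconst α * (1 + 1 / α - zetaR (α - 1)))) :
    ∀ n : ℕ, ∀ j : ℤ, |j| < J →
      (Finset.Icc (-J) J).inf' (Finset.nonempty_Icc.mpr (by omega)) (P n) ≤ P (n + 1) j ∧
      P (n + 1) j ≤ (Finset.Icc (-J) J).sup' (Finset.nonempty_Icc.mpr (by omega)) (P n) := by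
  intro n j hj
  have hC := Cconst_pos_s19 hα hα2
  have hζ : zetaR (α - 1) ≤ 0 :=
    (Complex.le_def.1 (riemannZeta_nonpos (by linarith) (by linarith))).1
  have hrange : ∀ i ∈ Icc (-J) J,
      P n i ∈ Set.Icc ((Icc (-J) J).inf' (nonempty_Icc.mpr (by omega)) (P n))
        ((Icc (-J) J).sup' (nonempty_Icc.mpr (by omega)) (P n)) :=
    fun i hi => ⟨inf'_le _ hi, le_sup' _ hi⟩
  rw [hscheme n j hj, scheme_eq_add_sum_stencilWeight hj]
  refine add_sum_mul_sub_mem_Icc (fun k _ => stencilWeight_nonneg (by positivity) hh.le hζ J j k)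
    (sum_stencilWeight_le_one hα hε hC hΔt.le hh hζ hCFL hj) (hrange j ?_) fun k hk => hrange _ ?_
  · rw [abs_lt] at hj; simp only [mem_Icc]; omega
  · rw [abs_lt] at hj; simp only [mem_erase, mem_Icc] at hk ⊢; omega
end
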